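/- arXiv:2011.05651 — 2 statements merged into one kernel-verified Lean document; each statement's English description precedes it below -/
import Mathlib

section
/- Let T > 0, C > 0, and let x, x̄ : [0,T] → ℝ³ be two C¹ curves satisfying the differential inequality |d/dt |x(t) − x̄(t)|²| ≤ C(t)·|x(t) − x̄(t)|²·(1 − log(|x(t) − x̄(t)|²)) whenever 0 < |x(t) − x̄(t)| ≤ 1, where C(·) ≥ 0 is integrable on [0,T] with ∫₀^T C(τ)dτ = K. If |x(0) − x̄(0)| ≤ 1 then for all t ∈ [0,T] with |x(t) − x̄(t)| ≤ 1 one has |x(t) − x̄(t)| ≤ e·|x(0) − x̄(0)|^{exp(−K)}; in particular the separation at time t is bounded by a constant times a positive power (namely e^{−K}) of the initial separation. -/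
/-!
Where `0 < φ ≤ 1` with `φ = |x - x̄|²`, the function `ψ = 1 - log φ` is positive and
`(log ψ)' = -(φ'/φ)/ψ ≥ -C`, so `ψ(b) ≥ ψ(a) e^{-K}`, which unwinds to
`φ(b) ≤ e φ(a)^{e^{-K}}`. Two continuity arguments globalize this: the separation cannot vanish
and become positive again (just after a last zero the bound would force it to stay away from
zero), and if `e |x(0) - x̄(0)|^{e^{-K}} < 1` the separation never leaves `[0, 1]`, while
otherwise the claim is trivial.
-/

open Real MeasureTheory Set Topology Filter

theorem one_sub_log_pos {x : ℝ} (hx0 : 0 ≤ x) (hx1 : x ≤ 1) : 0 < 1 - log x := by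
  linarith [log_nonpos hx0 hx1]

theorem log_one_sub_log_sub_integral_le {φ φ' C : ℝ → ℝ} {a b : ℝ} (hab : a ≤ b)
    (hφc : ContinuousOn φ (Icc a b)) (hφ : ∀ τ ∈ Ioo a b, HasDerivAt φ (φ' τ) τ)
    (hpos : ∀ τ ∈ Icc a b, 0 < φ τ) (hle : ∀ τ ∈ Icc a b, φ τ ≤ 1)
    (hC : IntegrableOn C (Icc a b))
    (hineq : ∀ τ ∈ Ioo a b, φ' τ ≤ C τ * φ τ * (1 - log (φ τ))) :
    log (1 - log (φ a)) - ∫ τ in a..b, C τ ≤ log (1 - log (φ b)) := by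
  have hψ : ∀ τ ∈ Icc a b, 0 < 1 - log (φ τ) := fun τ hτ =>
    one_sub_log_pos (hpos τ hτ).le (hle τ hτ)
  have hcont : ContinuousOn (fun τ => log (1 - log (φ τ))) (Icc a b) :=
    (continuousOn_const.sub (hφc.log fun τ hτ => (hpos τ hτ).ne')).log fun τ hτ => (hψ τ hτ).ne'
  have hderiv : ∀ τ ∈ Ioo a b, HasDerivAt (fun τ => log (1 - log (φ τ)))
      (-(φ' τ / φ τ) / (1 - log (φ τ))) τ := fun τ hτ =>
    (((hφ τ hτ).log (hpos τ (Ioo_subset_Icc_self hτ)).ne').const_sub 1).log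
      (hψ τ (Ioo_subset_Icc_self hτ)).ne'
  have hbound : ∀ τ ∈ Ioo a b, -C τ ≤ -(φ' τ / φ τ) / (1 - log (φ τ)) := fun τ hτ => by
    have hτ' := Ioo_subset_Icc_self hτ
    rw [le_div_iff₀ (hψ τ hτ'), neg_mul, neg_le_neg_iff, div_le_iff₀ (hpos τ hτ')]
    linarith [hineq τ hτ]
  have hftc := intervalIntegral.integral_le_sub_of_hasDeriv_right_of_le hab hcont
    (fun τ hτ => (hderiv τ hτ).hasDerivWithinAt) hC.neg hbound
  rw [Pi.neg_def, intervalIntegral.integral_neg] at hftc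
  linarith

theorem le_exp_one_mul_rpow_of_deriv_le {φ φ' C : ℝ → ℝ} {a b K : ℝ} (hab : a ≤ b)
    (hφc : ContinuousOn φ (Icc a b)) (hφ : ∀ τ ∈ Ioo a b, HasDerivAt φ (φ' τ) τ)
    (hpos : ∀ τ ∈ Icc a b, 0 < φ τ) (hle : ∀ τ ∈ Icc a b, φ τ ≤ 1)
    (hC : IntegrableOn C (Icc a b)) (hK : ∫ τ in a..b, C τ ≤ K)
    (hineq : ∀ τ ∈ Ioo a b, φ' τ ≤ C τ * φ τ * (1 - log (φ τ))) :
    φ b ≤ exp 1 * φ a ^ exp (-K) := by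
  have ha := hpos a (left_mem_Icc.2 hab)
  have hb := hpos b (right_mem_Icc.2 hab)
  have hψa := one_sub_log_pos ha.le (hle a (left_mem_Icc.2 hab))
  have hψb := one_sub_log_pos hb.le (hle b (right_mem_Icc.2 hab))
  have hlog := log_one_sub_log_sub_integral_le hab hφc hφ hpos hle hC hineq
  have hψ : (1 - log (φ a)) * exp (-K) ≤ 1 - log (φ b) := by
    rw [← exp_log hψa, ← exp_log hψb, ← exp_add]
    exact exp_le_exp.2 (by linarith)
  rw [← log_le_log_iff hb (by positivity), log_mul (exp_pos 1).ne' (by positivity), log_exp,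
    log_rpow ha]
  nlinarith [exp_pos (-K)]

theorem le_exp_one_mul_rpow_of_sq_le {p q ε : ℝ} (hp : 0 ≤ p) (hq : 0 ≤ q)
    (h : p ^ 2 ≤ exp 1 * (q ^ 2) ^ ε) : p ≤ exp 1 * q ^ ε := by
  have hexp : exp 1 ≤ exp 1 ^ 2 := by nlinarith [add_one_le_exp 1]
  rw [← pow_le_pow_iff_left₀ hp (by positivity) two_ne_zero, mul_pow]
  calc p ^ 2 ≤ exp 1 * (q ^ ε) ^ 2 := by rwa [rpow_pow_comm hq]
    _ ≤ exp 1 ^ 2 * (q ^ ε) ^ 2 := by gcongr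

theorem intervalIntegral_le_setIntegral {f : ℝ → ℝ} {a b : ℝ} {s : Set ℝ} (hab : a ≤ b)
    (hs : MeasurableSet s) (hsub : Icc a b ⊆ s) (hf : IntegrableOn f s)
    (hf0 : ∀ x ∈ s, 0 ≤ f x) : ∫ x in a..b, f x ≤ ∫ x in s, f x := by
  rw [intervalIntegral.integral_of_le hab]
  exact setIntegral_mono_set hf (ae_restrict_of_forall_mem hs hf0)
    (Ioc_subset_Icc_self.trans hsub).eventuallyLE

theorem forall_pos_of_le_mul_rpow {u : ℝ → ℝ} {a b c ε : ℝ} (hu : ContinuousOn u (Icc a b))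
    (hu0 : ∀ τ ∈ Icc a b, 0 ≤ u τ) (hε : 0 < ε) (hb : 0 < u b)
    (hbound : ∀ s ∈ Icc a b, (∀ τ ∈ Icc s b, 0 < u τ) → u b ≤ c * u s ^ ε) :
    ∀ τ ∈ Icc a b, 0 < u τ := by
  by_contra! hzero
  obtain ⟨τ₀, hτ₀, hτ₀0⟩ := hzero
  set Z := Icc a b ∩ u ⁻¹' Iic 0
  have hZ : IsCompact Z := isCompact_Icc.of_isClosed_subset
    (hu.preimage_isClosed_of_isClosed isClosed_Icc isClosed_Iic) inter_subset_left
  have hsZ : sSup Z ∈ Z := hZ.sSup_mem ⟨τ₀, hτ₀, hτ₀0⟩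
  set s := sSup Z
  have hus : u s = 0 := le_antisymm hsZ.2 (hu0 s hsZ.1)
  have hsb : s < b := hsZ.1.2.lt_of_ne fun h => by rw [h] at hus; exact hb.ne' hus
  have hbound_right : ∀ σ ∈ Ioc s b, u b ≤ c * u σ ^ ε := fun σ hσ => by
    refine hbound σ ⟨hsZ.1.1.trans hσ.1.le, hσ.2⟩ fun τ hτ => ?_
    by_contra! hτ0
    have : τ ≤ s := le_csSup hZ.bddAbove ⟨⟨hsZ.1.1.trans (hσ.1.le.trans hτ.1), hτ.2⟩, hτ0⟩
    linarith [hσ.1, hτ.1]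
  have hcont : ContinuousWithinAt u (Ioi s) s :=
    (hu s hsZ.1).mono_of_mem_nhdsWithin (mem_of_superset (Ioc_mem_nhdsGT hsb)
      (Ioc_subset_Icc_self.trans (Icc_subset_Icc_left hsZ.1.1)))
  have hlim : Tendsto (fun σ => c * u σ ^ ε) (𝓝[>] s) (𝓝 0) := by
    simpa [hus, zero_rpow hε.ne'] using ((hcont.rpow_const (Or.inr hε.le)).const_mul c).tendsto
  have := ge_of_tendsto hlim (eventually_of_mem (Ioc_mem_nhdsGT hsb) hbound_right)
  linarith

theorem forall_le_of_forall_le_imp_lt {u : ℝ → ℝ} {a t L : ℝ} (hu : ContinuousOn u (Icc a t))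
    (ha : u a ≤ L) (hlt : ∀ s ∈ Icc a t, (∀ τ ∈ Icc a s, u τ ≤ L) → u s < L) :
    ∀ τ ∈ Icc a t, u τ ≤ L := by
  by_contra! hexit
  obtain ⟨τ₀, hτ₀, hτ₀L⟩ := hexit
  set A := Icc a t ∩ u ⁻¹' Ici L
  have hA : IsCompact A := isCompact_Icc.of_isClosed_subset
    (hu.preimage_isClosed_of_isClosed isClosed_Icc isClosed_Ici) inter_subset_left
  have hsA : sInf A ∈ A := hA.sInf_mem ⟨τ₀, hτ₀, hτ₀L.le⟩
  set s := sInf A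
  have hbefore : ∀ τ ∈ Ico a s, u τ < L := fun τ hτ => by
    by_contra! hτL
    have : s ≤ τ := csInf_le hA.bddBelow ⟨⟨hτ.1, hτ.2.le.trans hsA.1.2⟩, hτL⟩
    linarith [hτ.2]
  have hus : u s ≤ L := by
    rcases hsA.1.1.eq_or_lt with has | has
    · rwa [← has]
    have hcont : ContinuousWithinAt u (Iio s) s :=
      (hu s hsA.1).mono_of_mem_nhdsWithin (mem_of_superset (Ico_mem_nhdsLT has)
        (Ico_subset_Icc_self.trans (Icc_subset_Icc_right hsA.1.2)))
    exact le_of_tendsto hcont.tendsto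
      (eventually_of_mem (Ico_mem_nhdsLT has) fun τ hτ => (hbefore τ hτ).le)
  have := hlt s hsA.1 fun τ hτ => hτ.2.eq_or_lt.elim (fun h => h ▸ hus)
    fun h => (hbefore τ ⟨hτ.1, h⟩).le
  exact this.not_ge hsA.2

theorem le_mul_rpow_of_local_bound {u : ℝ → ℝ} {t₀ T L c ε : ℝ}
    (hu : ContinuousOn u (Icc t₀ T)) (hu0 : ∀ τ ∈ Icc t₀ T, 0 ≤ u τ) (hε : 0 < ε) (hc : 0 ≤ c)
    (h₀ : u t₀ ≤ L)
    (hbound : ∀ a b, t₀ ≤ a → a ≤ b → b ≤ T → (∀ τ ∈ Icc a b, 0 < u τ ∧ u τ ≤ L) →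
      u b ≤ c * u a ^ ε) :
    ∀ t ∈ Icc t₀ T, u t ≤ L → u t ≤ c * u t₀ ^ ε := by
  have hstay : ∀ b ∈ Icc t₀ T, (∀ τ ∈ Icc t₀ b, u τ ≤ L) → u b ≤ c * u t₀ ^ ε := by
    intro b hb hle
    have hsub : Icc t₀ b ⊆ Icc t₀ T := Icc_subset_Icc_right hb.2
    rcases (hu0 b hb).eq_or_lt with hb0 | hbpos
    · rw [← hb0]
      exact mul_nonneg hc (rpow_nonneg (hu0 t₀ (hsub (left_mem_Icc.2 hb.1))) ε)
    have hpos := forall_pos_of_le_mul_rpow (hu.mono hsub) (fun τ hτ => hu0 τ (hsub hτ)) hε hbpos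
      fun s hs hs' => hbound s b hs.1 hs.2 hb.2 fun τ hτ =>
        ⟨hs' τ hτ, hle τ ⟨hs.1.trans hτ.1, hτ.2⟩⟩
    exact hbound t₀ b le_rfl hb.1 hb.2 fun τ hτ => ⟨hpos τ hτ, hle τ hτ⟩
  intro t ht htL
  rcases le_or_gt L (c * u t₀ ^ ε) with hcase | hcase
  · exact htL.trans hcase
  refine hstay t ht (forall_le_of_forall_le_imp_lt (hu.mono (Icc_subset_Icc_right ht.2)) h₀
    fun s hs hle => (hstay s ⟨hs.1, hs.2.trans ht.2⟩ hle).trans_lt hcase)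

theorem stmt5_general (T K : ℝ)
    (x xb : ℝ → EuclideanSpace ℝ (Fin 3)) (C : ℝ → ℝ)
    (hx : ContDiff ℝ 1 x) (hxb : ContDiff ℝ 1 xb)
    (hC0 : ∀ t ∈ Set.Icc (0:ℝ) T, 0 ≤ C t)
    (hCint : MeasureTheory.IntegrableOn C (Set.Icc (0:ℝ) T))
    (hK : ∫ τ in Set.Icc (0:ℝ) T, C τ = K)
    (hineq : ∀ t ∈ Set.Icc (0:ℝ) T, 0 < ‖x t - xb t‖ → ‖x t - xb t‖ ≤ 1 →
      |deriv (fun τ => ‖x τ - xb τ‖ ^ 2) t| ≤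
        C t * ‖x t - xb t‖ ^ 2 * (1 - Real.log (‖x t - xb t‖ ^ 2)))
    (h0 : ‖x 0 - xb 0‖ ≤ 1) :
    ∀ t ∈ Set.Icc (0:ℝ) T, ‖x t - xb t‖ ≤ 1 →
      ‖x t - xb t‖ ≤ Real.exp 1 * ‖x 0 - xb 0‖ ^ Real.exp (-K) := by
  have hN : Continuous fun τ => ‖x τ - xb τ‖ := (hx.continuous.sub hxb.continuous).norm
  have hφ : Differentiable ℝ fun τ => ‖x τ - xb τ‖ ^ 2 :=
    ((hx.sub hxb).norm_sq ℝ).differentiable one_ne_zero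
  refine le_mul_rpow_of_local_bound hN.continuousOn (fun τ _ => norm_nonneg _) (exp_pos _)
    (exp_pos 1).le h0 fun a b ha hab hbT hsep => ?_
  have hsub : Icc a b ⊆ Icc 0 T := Icc_subset_Icc ha hbT
  refine le_exp_one_mul_rpow_of_sq_le (norm_nonneg _) (norm_nonneg _)
    (le_exp_one_mul_rpow_of_deriv_le hab hφ.continuous.continuousOn
      (fun τ _ => (hφ τ).hasDerivAt) (fun τ hτ => pow_pos (hsep τ hτ).1 2)
      (fun τ hτ => pow_le_one₀ (norm_nonneg _) (hsep τ hτ).2) (hCint.mono_set hsub) ?_ ?_)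
  · exact hK ▸ intervalIntegral_le_setIntegral hab measurableSet_Icc hsub hCint hC0
  · intro τ hτ
    have hτ' := Ioo_subset_Icc_self hτ
    exact (le_abs_self _).trans (hineq τ (hsub hτ') (hsep τ hτ').1 (hsep τ hτ').2)

/-- Osgood/Gronwall estimate: curves satisfying the log-type differential inequality
separate at most like a power `exp(-K)` of the initial separation. -/
theorem stmt5 (T K : ℝ) (hT : 0 < T)
    (x xb : ℝ → EuclideanSpace ℝ (Fin 3)) (C : ℝ → ℝ)
    (hx : ContDiff ℝ 1 x) (hxb : ContDiff ℝ 1 xb)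
    (hC0 : ∀ t ∈ Set.Icc (0:ℝ) T, 0 ≤ C t)
    (hCint : MeasureTheory.IntegrableOn C (Set.Icc (0:ℝ) T))
    (hK : ∫ τ in Set.Icc (0:ℝ) T, C τ = K)
    (hineq : ∀ t ∈ Set.Icc (0:ℝ) T, 0 < ‖x t - xb t‖ → ‖x t - xb t‖ ≤ 1 →
      |deriv (fun τ => ‖x τ - xb τ‖ ^ 2) t| ≤
        C t * ‖x t - xb t‖ ^ 2 * (1 - Real.log (‖x t - xb t‖ ^ 2)))
    (h0 : ‖x 0 - xb 0‖ ≤ 1) :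
    ∀ t ∈ Set.Icc (0:ℝ) T, ‖x t - xb t‖ ≤ 1 →
      ‖x t - xb t‖ ≤ Real.exp 1 * ‖x 0 - xb 0‖ ^ Real.exp (-K) :=
  stmt5_general T K x xb C hx hxb hC0 hCint hK hineq h0
end

section
/- Let μ, λ > 0, ρ₁, ρ₂, ρ̃ > 0 with ρ₁ ≤ ρ̃ ≤ ρ₂, let P be continuous and strictly increasing on (0,∞), and let g : [0,T] → ℝ (representing t ↦ ρ(x(t),t)) be a positive C¹ function satisfying (μ+λ) d/dt[log g(t) − log ρ̃] + P(g(t)) − P(ρ̃) = −F(t) with g(0) ∈ [ρ₁, ρ₂], where F : [0,T] → ℝ is continuous and satisfies |∫_{t₀}^{t₁} F(τ)dτ| ≤ ε for all 0 ≤ t₀ ≤ t₁ ≤ T. If ε is small enough (depending only on μ, λ, ρ₁, ρ₂, ρ̃, P), then ρ₁/2 ≤ g(t) ≤ 2ρ₂ for all t ∈ [0,T]. -/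
/-!
Write `w = (μ + λ) (log g - log ρ̃)`, so that `w' = -F - (P(g) - P(ρ̃))`. If `g` rose above
`2ρ₂`, then on the last stretch `[s, t]` on which it stays above `ρ₂ ≥ ρ̃` the pressure term is
nonnegative by monotonicity of `P`, hence `w(t) - w(s) ≤ -∫ₛᵗ F ≤ ε`, while the left side exceeds
`(μ + λ) log 2`. The lower bound is symmetric, so `ε = (μ + λ) log 2` works.
-/

open Set MeasureTheory

theorem ContinuousOn.exists_last_eq_of_le {u : ℝ → ℝ} {a b c : ℝ} (hab : a ≤ b)
    (hu : ContinuousOn u (Icc a b)) (ha : u a ≤ c) (hb : c ≤ u b) :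
    ∃ s ∈ Icc a b, u s = c ∧ ∀ τ ∈ Icc s b, c ≤ u τ := by
  set S := Icc a b ∩ u ⁻¹' Iic c
  have hS : IsCompact S :=
    isCompact_Icc.of_isClosed_subset (hu.preimage_isClosed_of_isClosed isClosed_Icc isClosed_Iic)
      inter_subset_left
  have hsS : sSup S ∈ S := hS.sSup_mem ⟨a, ⟨le_rfl, hab⟩, ha⟩
  have hafter : ∀ τ ∈ Icc (sSup S) b, c ≤ u τ := by
    intro τ hτ
    by_contra! hlt
    have hτab : Icc τ b ⊆ Icc a b := Icc_subset_Icc (hsS.1.1.trans hτ.1) le_rfl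
    obtain ⟨x, hx, hxc⟩ := intermediate_value_Icc hτ.2 (hu.mono hτab) ⟨hlt.le, hb⟩
    have hxs : x ≤ sSup S := le_csSup hS.bddAbove ⟨hτab hx, hxc.le⟩
    have hxτ : x = τ := le_antisymm (hxs.trans hτ.1) hx.1
    exact hlt.ne (hxτ ▸ hxc)
  exact ⟨sSup S, hsS.1, le_antisymm hsS.2 (hafter _ ⟨le_rfl, hsS.1.2⟩), hafter⟩

theorem ContinuousOn.exists_last_eq_of_ge {u : ℝ → ℝ} {a b c : ℝ} (hab : a ≤ b)
    (hu : ContinuousOn u (Icc a b)) (ha : c ≤ u a) (hb : u b ≤ c) :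
    ∃ s ∈ Icc a b, u s = c ∧ ∀ τ ∈ Icc s b, u τ ≤ c := by
  obtain ⟨s, hs, hsc, hafter⟩ := hu.neg.exists_last_eq_of_le hab (neg_le_neg ha) (neg_le_neg hb)
  exact ⟨s, hs, neg_inj.mp hsc, fun τ hτ => neg_le_neg_iff.mp (hafter τ hτ)⟩

section IntegralBounds

variable {w F p : ℝ → ℝ} {s t : ℝ}

theorem sub_le_neg_integral_of_hasDerivAt (hst : s ≤ t)
    (hw : ∀ τ ∈ Icc s t, HasDerivAt w (-F τ - p τ) τ) (hF : IntegrableOn F (Icc s t))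
    (hp : ∀ τ ∈ Icc s t, 0 ≤ p τ) : w t - w s ≤ -∫ τ in s..t, F τ := by
  rw [← intervalIntegral.integral_neg]
  exact intervalIntegral.sub_le_integral_of_hasDeriv_right_of_le hst
    (fun τ hτ => (hw τ hτ).continuousAt.continuousWithinAt)
    (fun τ hτ => (hw τ (Ioo_subset_Icc_self hτ)).hasDerivWithinAt) hF.neg
    (fun τ hτ => by linarith [hp τ (Ioo_subset_Icc_self hτ)])

theorem neg_integral_le_sub_of_hasDerivAt (hst : s ≤ t)
    (hw : ∀ τ ∈ Icc s t, HasDerivAt w (-F τ - p τ) τ) (hF : IntegrableOn F (Icc s t))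
    (hp : ∀ τ ∈ Icc s t, p τ ≤ 0) : -∫ τ in s..t, F τ ≤ w t - w s := by
  rw [← intervalIntegral.integral_neg]
  exact intervalIntegral.integral_le_sub_of_hasDeriv_right_of_le hst
    (fun τ hτ => (hw τ hτ).continuousAt.continuousWithinAt)
    (fun τ hτ => (hw τ (Ioo_subset_Icc_self hτ)).hasDerivWithinAt) hF.neg
    (fun τ hτ => by linarith [hp τ (Ioo_subset_Icc_self hτ)])

end IntegralBounds

section LogDensity

variable {K ρt a t : ℝ} {P g F : ℝ → ℝ}

theorem le_two_mul_of_hasDerivAt_log {ρ₂ : ℝ} (hK : 0 < K) (hρt : 0 < ρt) (ht₂ : ρt ≤ ρ₂)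
    (hP : MonotoneOn P (Ioi 0)) (hat : a ≤ t) (hg : ContinuousOn g (Icc a t))
    (hgpos : ∀ τ, 0 < g τ) (hF : IntegrableOn F (Icc a t))
    (hw : ∀ τ ∈ Icc a t, HasDerivAt (fun τ => K * (Real.log (g τ) - Real.log ρt))
      (-F τ - (P (g τ) - P ρt)) τ)
    (hga : g a ≤ ρ₂) (hFsmall : ∀ s ∈ Icc a t, |∫ τ in s..t, F τ| ≤ K * Real.log 2) :
    g t ≤ 2 * ρ₂ := by
  by_contra! hgt
  have hρ₂ : 0 < ρ₂ := hρt.trans_le ht₂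
  obtain ⟨s, hs, hgs, hafter⟩ := hg.exists_last_eq_of_le hat hga (by linarith)
  have hincr := sub_le_neg_integral_of_hasDerivAt (p := fun τ => P (g τ) - P ρt) hs.2
    (fun τ hτ => hw τ ⟨hs.1.trans hτ.1, hτ.2⟩) (hF.mono_set (Icc_subset_Icc_left hs.1))
    (fun τ hτ => sub_nonneg.mpr (hP hρt (hgpos τ) (ht₂.trans (hafter τ hτ))))
  have hlog : Real.log 2 < Real.log (g t) - Real.log (g s) := by
    have := Real.log_lt_log (by positivity) hgt
    rw [Real.log_mul two_ne_zero hρ₂.ne'] at this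
    rw [hgs]
    linarith
  have := mul_lt_mul_of_pos_left hlog hK
  linarith [neg_le_abs (∫ τ in s..t, F τ), hFsmall s hs]

theorem half_le_of_hasDerivAt_log {ρ₁ : ℝ} (hK : 0 < K) (hρ₁ : 0 < ρ₁) (h₁t : ρ₁ ≤ ρt)
    (hP : MonotoneOn P (Ioi 0)) (hat : a ≤ t) (hg : ContinuousOn g (Icc a t))
    (hgpos : ∀ τ, 0 < g τ) (hF : IntegrableOn F (Icc a t))
    (hw : ∀ τ ∈ Icc a t, HasDerivAt (fun τ => K * (Real.log (g τ) - Real.log ρt))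
      (-F τ - (P (g τ) - P ρt)) τ)
    (hga : ρ₁ ≤ g a) (hFsmall : ∀ s ∈ Icc a t, |∫ τ in s..t, F τ| ≤ K * Real.log 2) :
    ρ₁ / 2 ≤ g t := by
  by_contra! hgt
  obtain ⟨s, hs, hgs, hafter⟩ := hg.exists_last_eq_of_ge hat hga (by linarith)
  have hdecr := neg_integral_le_sub_of_hasDerivAt (p := fun τ => P (g τ) - P ρt) hs.2
    (fun τ hτ => hw τ ⟨hs.1.trans hτ.1, hτ.2⟩) (hF.mono_set (Icc_subset_Icc_left hs.1))
    (fun τ hτ => sub_nonpos.mpr (hP (hgpos τ) (hρ₁.trans_le h₁t) ((hafter τ hτ).trans h₁t)))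
  have hlog : Real.log (g t) - Real.log (g s) < -Real.log 2 := by
    have := Real.log_lt_log (hgpos t) hgt
    rw [Real.log_div hρ₁.ne' two_ne_zero] at this
    rw [hgs]
    linarith
  have := mul_lt_mul_of_pos_left hlog hK
  linarith [le_abs_self (∫ τ in s..t, F τ), hFsmall s hs]

end LogDensity

theorem stmt15_general (μ lam ρ₁ ρ₂ ρt : ℝ) (hμ : 0 < μ) (hlam : 0 < lam)
    (hρ₁ : 0 < ρ₁) (h₁t : ρ₁ ≤ ρt) (ht₂ : ρt ≤ ρ₂)
    (P : ℝ → ℝ) (hPmono : StrictMonoOn P (Set.Ioi 0)) :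
    ∃ ε : ℝ, 0 < ε ∧
      ∀ (T : ℝ), 0 < T → ∀ (g F : ℝ → ℝ),
        ContDiff ℝ 1 g → (∀ t, 0 < g t) →
        Continuous F →
        (∀ t ∈ Set.Icc (0:ℝ) T,
          HasDerivAt (fun τ => (μ + lam) * (Real.log (g τ) - Real.log ρt))
            (-(F t) - (P (g t) - P ρt)) t) →
        g 0 ∈ Set.Icc ρ₁ ρ₂ →
        (∀ t₀ t₁ : ℝ, 0 ≤ t₀ → t₀ ≤ t₁ → t₁ ≤ T → |∫ τ in t₀..t₁, F τ| ≤ ε) →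
        ∀ t ∈ Set.Icc (0:ℝ) T, ρ₁ / 2 ≤ g t ∧ g t ≤ 2 * ρ₂ := by
  have hK : 0 < μ + lam := add_pos hμ hlam
  refine ⟨(μ + lam) * Real.log 2, by positivity, ?_⟩
  intro T _ g F hg hgpos hF hw hg0 hFsmall t ht
  have hwt : ∀ τ ∈ Icc 0 t, HasDerivAt (fun τ => (μ + lam) * (Real.log (g τ) - Real.log ρt))
      (-F τ - (P (g τ) - P ρt)) τ := fun τ hτ => hw τ ⟨hτ.1, hτ.2.trans ht.2⟩
  have hFsmallt : ∀ s ∈ Icc 0 t, |∫ τ in s..t, F τ| ≤ (μ + lam) * Real.log 2 :=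
    fun s hs => hFsmall s t hs.1 hs.2 ht.2
  exact ⟨half_le_of_hasDerivAt_log hK hρ₁ h₁t hPmono.monotoneOn ht.1 hg.continuous.continuousOn
      hgpos hF.integrableOn_Icc hwt hg0.1 hFsmallt,
    le_two_mul_of_hasDerivAt_log hK (hρ₁.trans_le h₁t) ht₂ hPmono.monotoneOn ht.1
      hg.continuous.continuousOn hgpos hF.integrableOn_Icc hwt hg0.2 hFsmallt⟩

/-- Maximum-principle bound for the density along particle trajectories: if the time
integrals of the effective viscous flux are uniformly small, the density stays in
`[ρ₁/2, 2ρ₂]`. The smallness threshold `ε` depends only on `μ, λ, ρ₁, ρ₂, ρ̃, P`. -/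
theorem stmt15 (μ lam ρ₁ ρ₂ ρt : ℝ) (hμ : 0 < μ) (hlam : 0 < lam)
    (hρ₁ : 0 < ρ₁) (h₁t : ρ₁ ≤ ρt) (ht₂ : ρt ≤ ρ₂)
    (P : ℝ → ℝ) (hPmono : StrictMonoOn P (Set.Ioi 0))
    (hPcont : ContinuousOn P (Set.Ioi 0)) :
    ∃ ε : ℝ, 0 < ε ∧
      ∀ (T : ℝ), 0 < T → ∀ (g F : ℝ → ℝ),
        ContDiff ℝ 1 g → (∀ t, 0 < g t) →
        Continuous F →
        (∀ t ∈ Set.Icc (0:ℝ) T,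
          HasDerivAt (fun τ => (μ + lam) * (Real.log (g τ) - Real.log ρt))
            (-(F t) - (P (g t) - P ρt)) t) →
        g 0 ∈ Set.Icc ρ₁ ρ₂ →
        (∀ t₀ t₁ : ℝ, 0 ≤ t₀ → t₀ ≤ t₁ → t₁ ≤ T → |∫ τ in t₀..t₁, F τ| ≤ ε) →
        ∀ t ∈ Set.Icc (0:ℝ) T, ρ₁ / 2 ≤ g t ∧ g t ≤ 2 * ρ₂ :=
  stmt15_general μ lam ρ₁ ρ₂ ρt hμ hlam hρ₁ h₁t ht₂ P hPmono
end
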